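/- arXiv:1309.5440 — 2 statements merged into one kernel-verified Lean document; each statement's English description precedes it below -/
import Mathlib

section
/- For every real α with 0 < α < 1, the inequality 1 + √( 1 - 4·α^{(α+1)/(1-α)} ) ≥ 2·α^{α/(1-α)} holds; equivalently, ( 1 + √( 1 - 4·α^{(α+1)/(1-α)} ) ) / ( 2·α^{α/(1-α)} ) ≥ 1. -/
/-!
With `x = α ^ (α / (1 - α))` the larger power is `x ^ 2 * α`, and the claim `2 x - 1 ≤ √(1 - 4 x² α)`
follows by squaring from `x * (1 + α) ≤ 1`. The latter holds because `log α ≤ α - 1` gives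
`x ≤ exp (-α)`, while `1 + α ≤ exp α`.
-/

open Real

lemma two_mul_sub_one_le_sqrt {x a : ℝ} (hx : 0 ≤ x) (h : x * (1 + a) ≤ 1) :
    2 * x - 1 ≤ √(1 - 4 * (x ^ 2 * a)) :=
  (le_abs_self _).trans <| abs_le_sqrt <| by nlinarith

lemma rpow_le_exp_mul_sub_one {α t : ℝ} (h0 : 0 < α) (ht : 0 ≤ t) :
    α ^ t ≤ exp (t * (α - 1)) := by
  rw [rpow_def_of_pos h0, mul_comm (log α)]
  gcongr
  linarith [log_le_sub_one_of_pos h0]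

lemma rpow_div_one_sub_mul_one_add_le_one {α : ℝ} (h0 : 0 < α) (h1 : α < 1) :
    α ^ (α / (1 - α)) * (1 + α) ≤ 1 := by
  have h1' : 0 < 1 - α := by linarith
  have hexp : α / (1 - α) * (α - 1) = -α := by field_simp; ring
  calc α ^ (α / (1 - α)) * (1 + α)
      ≤ exp (-α) * exp α := by
        rw [← hexp]
        gcongr
        · exact rpow_le_exp_mul_sub_one h0 (by positivity)
        · linarith [add_one_le_exp α]
    _ = 1 := by rw [← exp_add, neg_add_cancel, exp_zero]

lemma rpow_add_one_div_one_sub {α : ℝ} (h0 : 0 < α) (h1 : α ≠ 1) :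
    α ^ ((α + 1) / (1 - α)) = (α ^ (α / (1 - α))) ^ 2 * α := by
  have h1' : 1 - α ≠ 0 := sub_ne_zero.mpr h1.symm
  have hexp : (α + 1) / (1 - α) = α / (1 - α) + α / (1 - α) + 1 := by
    field_simp; ring
  rw [hexp, rpow_add h0, rpow_add h0, rpow_one, sq]

/-- For every real `α` with `0 < α < 1`,
`1 + √(1 - 4·α^((α+1)/(1-α))) ≥ 2·α^(α/(1-α))`. -/
theorem stmt_12 (α : ℝ) (h0 : 0 < α) (h1 : α < 1) :
    2 * α ^ (α / (1 - α)) ≤ 1 + Real.sqrt (1 - 4 * α ^ ((α + 1) / (1 - α))) := by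
  rw [rpow_add_one_div_one_sub h0 h1.ne]
  linarith [two_mul_sub_one_le_sqrt (rpow_nonneg h0.le _)
    (rpow_div_one_sub_mul_one_add_le_one h0 h1)]
end

section
/- Let a, b ∈ (0,1) with a + b > 1, and let γ = 2^{(H(b)-H(a))/(a+b-1)} where H is the binary entropy function. Then γ²·( (1-a) + b )² - 4a(1-b) ≥ 0. -/
/-- The binary entropy function `H(x) = -x·log₂ x - (1-x)·log₂(1-x)`. -/
noncomputable def binEnt (x : ℝ) : ℝ := -x * Real.logb 2 x - (1 - x) * Real.logb 2 (1 - x)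

/-
Put `c = 1 - b`, so that `H(b) = H(c)`, `c < a` and `(1 - a) + b = 2(1 - m)` with `m = (a + c)/2`;
the claim becomes `√(ac) ≤ γ (1 - m)`. Since `H'(x) = log₂ ((1 - x)/x)`, the exponent
`log₂ γ = (H(c) - H(a))/(a - c)` is the mean of `log₂ x - log₂ (1 - x)` over `[c, a]`. Both halves
are controlled by the Hermite–Hadamard inequalities for the concave `log`: the mean of `log x` is at
least `(log a + log c)/2`, and the mean of `log (1 - x)` is at most `log (1 - m)`. In antiderivative
form (`x log x - x` is a primitive of `log`) each is proved by a monotonicity argument.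
-/

open Real Set

lemma le_of_hasDerivAt_nonneg {f f' : ℝ → ℝ} {p q : ℝ} (hpq : p ≤ q)
    (hf : ∀ x ∈ Icc p q, HasDerivAt f (f' x) x) (hf' : ∀ x ∈ Ioo p q, 0 ≤ f' x) :
    f p ≤ f q := by
  refine monotoneOn_of_hasDerivWithinAt_nonneg (convex_Icc p q)
    (fun x hx ↦ (hf x hx).continuousAt.continuousWithinAt)
    (fun x hx ↦ (hf x (interior_subset hx)).hasDerivWithinAt) (fun x hx ↦ ?_)
    (left_mem_Icc.2 hpq) (right_mem_Icc.2 hpq) hpq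
  rw [interior_Icc] at hx
  exact hf' x hx

lemma hasDerivAt_mul_log_sub_self {x : ℝ} (hx : x ≠ 0) :
    HasDerivAt (fun y ↦ y * log y - y) (log x) x := by
  simpa using (hasDerivAt_mul_log hx).fun_sub (hasDerivAt_id' x)

lemma sub_mul_log_add_log_le {p q : ℝ} (hp : 0 < p) (hpq : p ≤ q) :
    (q - p) * (log p + log q) ≤ 2 * ((q * log q - q) - (p * log p - p)) := by
  let G x := 2 * ((x * log x - x) - (p * log p - p)) - (x - p) * (log p + log x)
  suffices G p ≤ G q by simp only [G] at this; linarith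
  refine le_of_hasDerivAt_nonneg (f' := fun x ↦ log x - log p - (1 - p / x)) hpq
    (fun x hx ↦ ?_) (fun x hx ↦ ?_)
  · have hx : x ≠ 0 := (hp.trans_le hx.1).ne'
    have := (((hasDerivAt_mul_log_sub_self hx).sub_const (p * log p - p)).const_mul 2).sub
      (((hasDerivAt_id x).sub_const p).mul ((hasDerivAt_log hx).const_add (log p)))
    refine this.congr_deriv ?_
    simp only [id]
    field_simp
    ring
  · have hx : 0 < x := hp.trans hx.1
    have := one_sub_inv_le_log_of_pos (div_pos hx hp)
    rw [inv_div, log_div hx.ne' hp.ne'] at this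
    linarith

lemma sub_mul_log_le_sub_mul_log_midpoint {p q : ℝ} (hp : 0 < p) (hpq : p ≤ q) :
    (q * log q - q) - (p * log p - p) ≤ (q - p) * log ((p + q) / 2) := by
  let K x := (x - p) * log ((p + x) / 2) - ((x * log x - x) - (p * log p - p))
  suffices K p ≤ K q by simp only [K] at this; linarith
  refine le_of_hasDerivAt_nonneg (f' := fun x ↦ log ((p + x) / 2) - log x + (x - p) / (p + x))
    hpq (fun x hx ↦ ?_) (fun x hx ↦ ?_)
  · have hx : 0 < x := hp.trans_le hx.1
    have hm : (p + x) / 2 ≠ 0 := by positivity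
    have hmid : HasDerivAt (fun y ↦ (p + y) / 2) (1 / 2) x := by
      simpa using ((hasDerivAt_id x).const_add p).div_const 2
    have := (((hasDerivAt_id x).sub_const p).mul ((hasDerivAt_log hm).comp x hmid)).sub
      ((hasDerivAt_mul_log_sub_self hx.ne').sub_const (p * log p - p))
    refine this.congr_deriv ?_
    simp only [id, Function.comp_apply]
    field_simp
    ring
  · have hx : 0 < x := hp.trans hx.1
    have hm : 0 < (p + x) / 2 := by positivity
    have := one_sub_inv_le_log_of_pos (div_pos hm hx)
    rw [inv_div, log_div hm.ne' hx.ne'] at this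
    have : (x - p) / (p + x) = -(1 - x / ((p + x) / 2)) := by field_simp; ring
    linarith

lemma sub_mul_log_le_binEntropy_sub {a c : ℝ} (hc : 0 < c) (hca : c ≤ a) (ha : a < 1) :
    (a - c) * log (a * c / (1 - (a + c) / 2) ^ 2) ≤ 2 * (binEntropy c - binEntropy a) := by
  have hlog : log (a * c / (1 - (a + c) / 2) ^ 2)
      = log c + log a - 2 * log (((1 - a) + (1 - c)) / 2) := by
    rw [log_div (by nlinarith) (by nlinarith), log_mul (by linarith) hc.ne', log_pow]
    ring_nf
  have hinner := sub_mul_log_add_log_le hc hca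
  have houter := sub_mul_log_le_sub_mul_log_midpoint (sub_pos.2 ha) (sub_le_sub_left hca 1)
  simp only [binEntropy, log_inv]
  rw [hlog]
  nlinarith

lemma binEnt_eq_binEntropy_div (x : ℝ) : binEnt x = binEntropy x / log 2 := by
  simp only [binEnt, binEntropy, logb, log_inv]
  ring

lemma binEnt_one_sub (x : ℝ) : binEnt (1 - x) = binEnt x := by
  rw [binEnt_eq_binEntropy_div, binEntropy_one_sub, binEnt_eq_binEntropy_div]

lemma mul_le_sq_rpow_binEnt_mul_sq {a c : ℝ} (hc : 0 < c) (hca : c < a) (ha : a < 1) :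
    a * c ≤ (2 ^ ((binEnt c - binEnt a) / (a - c))) ^ 2 * (1 - (a + c) / 2) ^ 2 := by
  have hm : 0 < (1 - (a + c) / 2) ^ 2 := by nlinarith
  have hac : 0 < a * c := by nlinarith
  have key : log (a * c / (1 - (a + c) / 2) ^ 2) ≤ 2 * (binEntropy c - binEntropy a) / (a - c) :=
    (le_div_iff₀' (sub_pos.2 hca)).2 (by linarith [sub_mul_log_le_binEntropy_sub hc hca.le ha])
  rw [← div_le_iff₀ hm, ← log_le_log_iff (by positivity) (by positivity), log_pow,
    log_rpow two_pos, binEnt_eq_binEntropy_div, binEnt_eq_binEntropy_div]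
  convert key using 1
  have := (log_pos one_lt_two).ne'
  push_cast
  field_simp

/-- For `a, b ∈ (0,1)` with `a + b > 1` and `γ = 2^((H(b)-H(a))/(a+b-1))`,
the discriminant `γ²·((1-a)+b)² - 4a(1-b)` is nonnegative. -/
theorem stmt_15 (a b : ℝ) (ha : a ∈ Set.Ioo (0 : ℝ) 1) (hb : b ∈ Set.Ioo (0 : ℝ) 1)
    (hab : 1 < a + b) (γ : ℝ) (hγ : γ = (2 : ℝ) ^ ((binEnt b - binEnt a) / (a + b - 1))) :
    0 ≤ γ ^ 2 * ((1 - a) + b) ^ 2 - 4 * a * (1 - b) := by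
  have h := mul_le_sq_rpow_binEnt_mul_sq (c := 1 - b) (by linarith [hb.2]) (by linarith) ha.2
  rw [binEnt_one_sub, sub_sub_eq_add_sub, ← hγ] at h
  nlinarith
end
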